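/- Let λ > 0 and α > 0 and let f ∈ L¹(ℝ). Then for every ω ∈ ℝ, the Fourier transform of the left tempered fractional integral of f satisfies F[I₊^{α,λ} f](ω) = (λ + iω)^{−α} F[f](ω), where (λ + iω)^{−α} is the principal branch complex power. -/

import Mathlib

open MeasureTheory

/-- Left tempered fractional integral
`I₊^{α,λ} f(x) = (1/Γ(α)) ∫_{-∞}^x (x−η)^{α−1} e^{−λ(x−η)} f(η) dη`. -/
noncomputable def leftTemperedIntegral (α lam : ℝ) (f : ℝ → ℝ) (x : ℝ) : ℝ :=
  (1 / Real.Gamma α) * ∫ η in Set.Iic x, (x - η) ^ (α - 1) * Real.exp (-lam * (x - η)) * f η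

/-!
`I₊^{α,λ} f = Γ(α)⁻¹ (k ⋆ f)` for the kernel `k t = t^{α-1} e^{-λt} 𝟙_{t>0}`, so by the
convolution theorem it suffices to show
`F[k](ω) = ∫₀^∞ t^{α-1} e^{-(λ+iω)t} dt = Γ(α)(λ+iω)^{-α}`.
For real `λ + iω` this is the Gamma integral. Both sides are analytic on `Re z > 0`: the left one
because it is the complex moment generating function of `t ↦ -t` under the measure `t^{α-1} dt`
on `(0, ∞)`. The identity theorem then gives the equality on the whole half-plane.
-/

open Set Filter Topology ProbabilityTheory Complex FourierTransform Convolution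
open scoped NNReal ENNReal

noncomputable def rpowMeasure (s : ℝ) : Measure ℝ :=
  (volume.restrict (Ioi 0)).withDensity fun t => ((t ^ (s - 1)).toNNReal : ℝ≥0∞)

lemma integral_rpowMeasure (s : ℝ) (g : ℝ → ℂ) :
    ∫ t, g t ∂rpowMeasure s = ∫ t in Ioi 0, t ^ (s - 1) • g t := by
  rw [rpowMeasure, integral_withDensity_eq_integral_smul (by fun_prop)]
  refine setIntegral_congr_fun measurableSet_Ioi fun t ht => ?_
  rw [NNReal.smul_def, Real.coe_toNNReal _ (Real.rpow_nonneg (le_of_lt ht) _)]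

lemma complexMGF_neg_rpowMeasure (s : ℝ) (z : ℂ) :
    complexMGF (fun t => -t) (rpowMeasure s) z =
      ∫ t in Ioi (0 : ℝ), t ^ (s - 1) • cexp (-(z * t)) := by
  simp [complexMGF, integral_rpowMeasure]

lemma integrableOn_rpow_mul_exp_neg_mul {s b : ℝ} (hs : 0 < s) (hb : 0 < b) :
    IntegrableOn (fun t : ℝ => t ^ (s - 1) * Real.exp (-(b * t))) (Ioi 0) := by
  simpa using integrableOn_rpow_mul_exp_neg_mul_rpow (s := s - 1) (by linarith) zero_lt_one hb

lemma Ioi_subset_integrableExpSet_rpowMeasure {s : ℝ} (hs : 0 < s) :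
    Ioi 0 ⊆ integrableExpSet (fun t => -t) (rpowMeasure s) := by
  intro b hb
  rw [integrableExpSet, mem_ofPred_eq, rpowMeasure,
    integrable_withDensity_iff_integrable_smul (by fun_prop)]
  refine (integrableOn_rpow_mul_exp_neg_mul hs hb).congr_fun (fun t ht => ?_) measurableSet_Ioi
  rw [NNReal.smul_def, Real.coe_toNNReal _ (Real.rpow_nonneg (le_of_lt ht) _), smul_eq_mul,
    mul_neg]

lemma analyticOnNhd_complexMGF_neg_rpowMeasure {s : ℝ} (hs : 0 < s) :
    AnalyticOnNhd ℂ (complexMGF (fun t => -t) (rpowMeasure s)) {z | 0 < z.re} :=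
  analyticOnNhd_complexMGF.mono fun _ hz =>
    interior_maximal (Ioi_subset_integrableExpSet_rpowMeasure hs) isOpen_Ioi hz

lemma integral_rpow_smul_cexp_neg_ofReal_mul_Ioi {s r : ℝ} (hs : 0 < s) (hr : 0 < r) :
    ∫ t in Ioi (0 : ℝ), t ^ (s - 1) • cexp (-(r * t)) = Gamma s * r ^ (-(s : ℂ)) :=
  calc ∫ t in Ioi (0 : ℝ), t ^ (s - 1) • cexp (-(r * t))
      = ∫ t in Ioi (0 : ℝ), ((t ^ (s - 1) * Real.exp (-(r * t)) : ℝ) : ℂ) := by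
        push_cast
        simp_rw [real_smul]
    _ = Gamma s * r ^ (-(s : ℂ)) := by
        rw [integral_complex_ofReal, Real.integral_rpow_mul_exp_neg_mul_Ioi hs hr, ofReal_mul,
          ← Gamma_ofReal, ofReal_cpow (by positivity), one_div, ofReal_inv,
          inv_cpow _ _ (by simpa [arg_ofReal_of_nonneg hr.le] using Real.pi_ne_zero.symm),
          ← cpow_neg, mul_comm]

lemma integral_rpow_smul_cexp_neg_mul_Ioi {s : ℝ} (hs : 0 < s) {z : ℂ} (hz : 0 < z.re) :
    ∫ t in Ioi (0 : ℝ), t ^ (s - 1) • cexp (-(z * t)) = Gamma s * z ^ (-(s : ℂ)) := by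
  have hpower : AnalyticOnNhd ℂ (fun w : ℂ => Gamma s * w ^ (-(s : ℂ))) {w | 0 < w.re} :=
    DifferentiableOn.analyticOnNhd (fun w hw => ((differentiableAt_id.cpow_const
      (Or.inl hw)).const_mul _).differentiableWithinAt) (isOpen_lt continuous_const continuous_re)
  have hofReal : Tendsto ((↑) : ℝ → ℂ) (𝓝[≠] 1) (𝓝[≠] 1) :=
    tendsto_nhdsWithin_iff.2 ⟨tendsto_nhdsWithin_of_tendsto_nhds continuous_ofReal.continuousAt,
      eventually_nhdsWithin_of_forall fun t ht => ofReal_ne_one.mpr ht⟩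
  have hreal : ∃ᶠ r : ℝ in 𝓝[≠] 1,
      complexMGF (fun t => -t) (rpowMeasure s) r = Gamma s * (r : ℂ) ^ (-(s : ℂ)) :=
    ((eventually_gt_nhds zero_lt_one).filter_mono nhdsWithin_le_nhds).frequently.mono
      fun r hr => by
        rw [complexMGF_neg_rpowMeasure, integral_rpow_smul_cexp_neg_ofReal_mul_Ioi hs hr]
  rw [← complexMGF_neg_rpowMeasure]
  exact (analyticOnNhd_complexMGF_neg_rpowMeasure hs).eqOn_of_preconnected_of_frequently_eq hpower
    (convex_halfSpace_re_gt 0).isPreconnected (z₀ := 1) (by simp) (hofReal.frequently hreal) hz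

lemma integral_mul_cexp_neg_I_mul_eq_fourier (g : ℝ → ℂ) (ω : ℝ) :
    ∫ x : ℝ, g x * cexp (-I * ω * x) = 𝓕 g (ω / (2 * Real.pi)) := by
  rw [Real.fourier_real_eq_integral_exp_smul]
  congr 1 with x
  rw [smul_eq_mul, mul_comm]
  congr 2
  push_cast
  field_simp

noncomputable def temperedKernel (α lam : ℝ) : ℝ → ℂ :=
  indicator (Ioi 0) fun t => ((t ^ (α - 1) * Real.exp (-(lam * t)) : ℝ) : ℂ)

lemma integrable_temperedKernel {α lam : ℝ} (hα : 0 < α) (hlam : 0 < lam) :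
    Integrable (temperedKernel α lam) := by
  rw [temperedKernel, integrable_indicator_iff measurableSet_Ioi]
  exact (integrableOn_rpow_mul_exp_neg_mul hα hlam).ofReal

lemma leftTemperedIntegral_eq_convolution (α lam : ℝ) (f : ℝ → ℝ) (x : ℝ) :
    (leftTemperedIntegral α lam f x : ℂ) =
      (Gamma α)⁻¹ *
        (temperedKernel α lam ⋆[ContinuousLinearMap.mul ℂ ℂ] fun η => (f η : ℂ)) x := by
  rw [convolution_eq_swap, leftTemperedIntegral, ofReal_mul, one_div, ofReal_inv, Gamma_ofReal,
    ← integral_complex_ofReal, ← setIntegral_congr_set Iio_ae_eq_Iic,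
    ← integral_indicator measurableSet_Iio]
  congr 2 with η
  by_cases h : η < x <;> simp [temperedKernel, h]

lemma fourier_temperedKernel {α lam : ℝ} (hα : 0 < α) (hlam : 0 < lam) (ω : ℝ) :
    𝓕 (temperedKernel α lam) (ω / (2 * Real.pi)) = Gamma α * (lam + I * ω) ^ (-(α : ℂ)) := by
  rw [← integral_mul_cexp_neg_I_mul_eq_fourier,
    ← integral_rpow_smul_cexp_neg_mul_Ioi hα (z := lam + I * ω) (by simpa using hlam),
    ← integral_indicator measurableSet_Ioi]
  congr 1 with t
  by_cases ht : 0 < t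
  · simp only [temperedKernel, indicator_of_mem (mem_Ioi.2 ht), real_smul, ofReal_mul,
      ofReal_exp, mul_assoc, ← Complex.exp_add]
    push_cast
    ring_nf
  · simp [temperedKernel, ht]

theorem fourier_left_tempered_integral (lam α : ℝ) (hlam : 0 < lam) (hα : 0 < α)
    (f : ℝ → ℝ) (hf : Integrable f) (ω : ℝ) :
    ∫ x : ℝ, (leftTemperedIntegral α lam f x : ℂ) * Complex.exp (-Complex.I * ω * x) =
      ((lam : ℂ) + Complex.I * ω) ^ (-(α : ℂ)) *
        ∫ x : ℝ, (f x : ℂ) * Complex.exp (-Complex.I * ω * x) := by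
  have hf' : Integrable fun x => (f x : ℂ) := hf.ofReal
  simp_rw [leftTemperedIntegral_eq_convolution, mul_assoc (Gamma α)⁻¹]
  rw [integral_const_mul, integral_mul_cexp_neg_I_mul_eq_fourier,
    integral_mul_cexp_neg_I_mul_eq_fourier,
    Real.fourier_mul_convolution_eq (integrable_temperedKernel hα hlam) hf',
    fourier_temperedKernel hα hlam, ← mul_assoc, ← mul_assoc,
    inv_mul_cancel₀ (Gamma_ne_zero_of_re_pos (by simpa using hα)), one_mul]
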